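/- Let L : ℝ^n → ℝ be differentiable with ‖∇L(x)‖ ≤ F₁ for all x, let g^τ : ℝ^n → ℝ, let α > 0, γ > 0, let d^τ, d^{τ+1}, d̂ ∈ ℝ^n with ‖d̂ − d^τ‖ ≤ D and ‖d^{τ+1} − d^τ‖ ≤ D, let μ^τ ≥ 0 and μ^{τ+1} = max(μ^τ + γ·g^τ(d^τ), 0), and suppose g^τ(d̂) ≤ −ε for some ε > 0. If the primal iterate satisfies the optimality inequality ∇L(d^τ)ᵀ(d^{τ+1} − d^τ) + μ^{τ+1}·g^τ(d^τ) + ‖d^{τ+1} − d^τ‖²/(2α) ≤ ∇L(d^τ)ᵀ(d̂ − d^τ) + μ^{τ+1}·g^τ(d̂) + (‖d̂ − d^τ‖² − ‖d̂ − d^{τ+1}‖²)/(2α), then μ^τ·g^τ(d^τ) ≤ 2F₁D − ε·μ^{τ+1} + (‖d̂ − d^τ‖² − ‖d̂ − d^{τ+1}‖²)/(2α). -/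
import Mathlib


open RealInnerProductSpace

/-- Per-step bound on `μ^τ · g^τ(d^τ)` from the optimality of the OGRS primal update
at the Slater point. -/
theorem ogrs_per_step_bound {n : ℕ}
    (L : EuclideanSpace ℝ (Fin n) → ℝ) (hL : Differentiable ℝ L)
    (F₁ D α γ ε : ℝ) (hα : 0 < α) (hγ : 0 < γ) (hε : 0 < ε)
    (g : EuclideanSpace ℝ (Fin n) → ℝ)
    (dτ dτ1 dhat : EuclideanSpace ℝ (Fin n))
    (hgrad : ∀ x, ‖gradient L x‖ ≤ F₁)
    (hD1 : ‖dhat - dτ‖ ≤ D) (hD2 : ‖dτ1 - dτ‖ ≤ D)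
    (μτ μτ1 : ℝ) (hμτ : 0 ≤ μτ)
    (hupd : μτ1 = max (μτ + γ * g dτ) 0)
    (hslater : g dhat ≤ -ε)
    (hopt : ⟪gradient L dτ, dτ1 - dτ⟫ + μτ1 * g dτ + ‖dτ1 - dτ‖ ^ 2 / (2 * α) ≤
        ⟪gradient L dτ, dhat - dτ⟫ + μτ1 * g dhat +
          (‖dhat - dτ‖ ^ 2 - ‖dhat - dτ1‖ ^ 2) / (2 * α)) :
    μτ * g dτ ≤ 2 * F₁ * D - ε * μτ1 +
      (‖dhat - dτ‖ ^ 2 - ‖dhat - dτ1‖ ^ 2) / (2 * α) := by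
  have hμ1 : 0 ≤ μτ1 := hupd ▸ le_max_right _ _
  have hF : 0 ≤ F₁ := le_trans (norm_nonneg _) (hgrad dτ)
  have hDnn : 0 ≤ D := le_trans (norm_nonneg _) hD1
  -- μτ * g dτ ≤ μτ1 * g dτ
  have key : μτ * g dτ ≤ μτ1 * g dτ := by
    rcases le_or_gt 0 (g dτ) with hg | hg
    · have : μτ ≤ μτ1 := by
        rw [hupd]
        exact le_trans (by nlinarith) (le_max_left _ _)
      exact mul_le_mul_of_nonneg_right this hg
    · have : μτ1 ≤ μτ := by
        rw [hupd]
        exact max_le (by nlinarith) hμτ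
      nlinarith
  -- Cauchy-Schwarz bounds
  have hcs1 : ⟪gradient L dτ, dhat - dτ⟫ ≤ F₁ * D := by
    calc ⟪gradient L dτ, dhat - dτ⟫ ≤ ‖gradient L dτ‖ * ‖dhat - dτ‖ :=
          real_inner_le_norm _ _
      _ ≤ F₁ * D := mul_le_mul (hgrad dτ) hD1 (norm_nonneg _) hF
  have hcs2 : -(F₁ * D) ≤ ⟪gradient L dτ, dτ1 - dτ⟫ := by
    have h := abs_real_inner_le_norm (gradient L dτ) (dτ1 - dτ)
    have h2 : ‖gradient L dτ‖ * ‖dτ1 - dτ‖ ≤ F₁ * D :=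
      mul_le_mul (hgrad dτ) hD2 (norm_nonneg _) hF
    have := neg_abs_le ⟪gradient L dτ, dτ1 - dτ⟫
    linarith
  have hsq : 0 ≤ ‖dτ1 - dτ‖ ^ 2 / (2 * α) := by positivity
  have hgd : μτ1 * g dhat ≤ -ε * μτ1 := by nlinarith
  linarith
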